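/- Let d ≥ 1 and c₀, C₀, C_M > 0. There exists τ₀ > 0, depending only on c₀, C₀ and C_M, with the following property. Let F ∈ ℝ^{d×d} be invertible with |F| ≤ C_M and |F⁻¹| ≤ C_M, let θ ≥ 0 and w ∈ ℝ with w ≥ c₀θ, and let g ∈ ℝ^{d×d} satisfy |g| ≤ 2C₀ · min{θ,1} · (1+|F|) and be such that S := (1/2)F⁻¹g is a symmetric matrix. Let G ∈ ℝ^{d×d}, set Ċ := GᵀF + FᵀG, and let ξ ∈ ℝ with ξ ≥ c₀|Ċ|². Then for every τ ∈ (0, τ₀]: ⟨g, G⟩ ≥ −w/τ − ξ. -/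
import Mathlib

set_option maxHeartbeats 1000000

open Matrix

/-- Frobenius inner product `⟨A,B⟩ = trace(AᵀB) = ∑ᵢⱼ Aᵢⱼ Bᵢⱼ`. -/
def minner {d : ℕ} (A B : Matrix (Fin d) (Fin d) ℝ) : ℝ := ∑ i, ∑ j, A i j * B i j

/-- Frobenius norm. -/
noncomputable def frobNorm {d : ℕ} (A : Matrix (Fin d) (Fin d) ℝ) : ℝ :=
  Real.sqrt (minner A A)

lemma minner_self_nonneg {d : ℕ} (A : Matrix (Fin d) (Fin d) ℝ) : 0 ≤ minner A A := by
  refine Finset.sum_nonneg fun i _ => Finset.sum_nonneg fun j _ => mul_self_nonneg _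

lemma frobNorm_nonneg {d : ℕ} (A : Matrix (Fin d) (Fin d) ℝ) : 0 ≤ frobNorm A :=
  Real.sqrt_nonneg _

lemma frobNorm_sq {d : ℕ} (A : Matrix (Fin d) (Fin d) ℝ) :
    frobNorm A ^ 2 = minner A A := Real.sq_sqrt (minner_self_nonneg A)

/-- Cauchy–Schwarz for the Frobenius inner product. -/
lemma minner_le_frob {d : ℕ} (A B : Matrix (Fin d) (Fin d) ℝ) :
    minner A B ≤ frobNorm A * frobNorm B := by
  have h := Real.sum_mul_le_sqrt_mul_sqrt (Finset.univ : Finset (Fin d × Fin d))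
    (fun p => A p.1 p.2) (fun p => B p.1 p.2)
  have e1 : minner A B = ∑ p : Fin d × Fin d, A p.1 p.2 * B p.1 p.2 := by
    rw [minner, ← Finset.sum_product']; rfl
  have e2 : minner A A = ∑ p : Fin d × Fin d, (A p.1 p.2) ^ 2 := by
    rw [minner, ← Finset.sum_product']
    simp [pow_two]
  have e3 : minner B B = ∑ p : Fin d × Fin d, (B p.1 p.2) ^ 2 := by
    rw [minner, ← Finset.sum_product']
    simp [pow_two]
  rw [e1, frobNorm, frobNorm, e2, e3]
  exact h

lemma neg_frob_le_minner {d : ℕ} (A B : Matrix (Fin d) (Fin d) ℝ) :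
    -(frobNorm A * frobNorm B) ≤ minner A B := by
  have h := minner_le_frob (-A) B
  have e : minner (-A) B = -minner A B := by
    simp [minner]
  have e2 : frobNorm (-A) = frobNorm A := by
    unfold frobNorm
    congr 1
    simp [minner]
  rw [e, e2] at h
  linarith

lemma frobNorm_smul {d : ℕ} (c : ℝ) (A : Matrix (Fin d) (Fin d) ℝ) :
    frobNorm (c • A) = |c| * frobNorm A := by
  have : minner (c • A) (c • A) = c ^ 2 * minner A A := by
    simp only [minner, Finset.mul_sum, Matrix.smul_apply, smul_eq_mul]
    congr 1; funext i; congr 1; funext j; ring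
  rw [frobNorm, this, Real.sqrt_mul (sq_nonneg c), Real.sqrt_sq_eq_abs, frobNorm]

/-- Submultiplicativity of the Frobenius norm. -/
lemma frobNorm_mul_le {d : ℕ} (A B : Matrix (Fin d) (Fin d) ℝ) :
    frobNorm (A * B) ≤ frobNorm A * frobNorm B := by
  have key : minner (A * B) (A * B) ≤ minner A A * minner B B := by
    have h1 : minner (A * B) (A * B) = ∑ i, ∑ j, (∑ k, A i k * B k j) ^ 2 := by
      simp [minner, Matrix.mul_apply, pow_two]
    rw [h1]
    calc ∑ i, ∑ j, (∑ k, A i k * B k j) ^ 2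
        ≤ ∑ i, ∑ j, (∑ k, (A i k) ^ 2) * (∑ k, (B k j) ^ 2) := by
          refine Finset.sum_le_sum fun i _ => Finset.sum_le_sum fun j _ =>
            Finset.sum_mul_sq_le_sq_mul_sq _ _ _
      _ = (∑ i, ∑ k, (A i k) ^ 2) * (∑ j, ∑ k, (B k j) ^ 2) :=
          (Finset.sum_mul_sum _ _ _ _).symm
      _ = minner A A * minner B B := by
          simp only [minner, pow_two]
          congr 1
          rw [Finset.sum_comm]
  calc frobNorm (A * B) = Real.sqrt (minner (A * B) (A * B)) := rfl
    _ ≤ Real.sqrt (minner A A * minner B B) := Real.sqrt_le_sqrt key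
    _ = Real.sqrt (minner A A) * Real.sqrt (minner B B) :=
        Real.sqrt_mul (minner_self_nonneg A) _
    _ = frobNorm A * frobNorm B := rfl

lemma minner_eq_trace {d : ℕ} (A B : Matrix (Fin d) (Fin d) ℝ) :
    minner A B = (Aᵀ * B).trace := by
  simp only [minner, Matrix.trace, Matrix.diag, Matrix.mul_apply, Matrix.transpose_apply]
  rw [Finset.sum_comm]

/-- Key pointwise estimate for the thermal step: there is `τ₀ > 0` (depending only on
`c₀, C₀, C_M`) such that `⟨g, G⟩ ≥ −w/τ − ξ` for every `τ ∈ (0, τ₀]`, whenever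
`|F|, |F⁻¹| ≤ C_M`, `θ ≥ 0`, `w ≥ c₀ θ`, `|g| ≤ 2C₀ (θ ∧ 1)(1+|F|)`, `½F⁻¹g` is symmetric,
`Ċ = GᵀF + FᵀG`, and `ξ ≥ c₀ |Ċ|²`. -/
theorem thermal_step_coupling_estimate (d : ℕ) (hd : 1 ≤ d)
    (c₀ C₀ CM : ℝ) (hc₀ : 0 < c₀) (hC₀ : 0 < C₀) (hCM : 0 < CM) :
    ∃ τ₀ : ℝ, 0 < τ₀ ∧
      ∀ (F g G : Matrix (Fin d) (Fin d) ℝ) (θ w ξ : ℝ),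
        IsUnit F.det →
        frobNorm F ≤ CM → frobNorm F⁻¹ ≤ CM →
        0 ≤ θ → c₀ * θ ≤ w →
        frobNorm g ≤ 2 * C₀ * min θ 1 * (1 + frobNorm F) →
        ((1 / 2 : ℝ) • (F⁻¹ * g))ᵀ = (1 / 2 : ℝ) • (F⁻¹ * g) →
        c₀ * (frobNorm (Gᵀ * F + Fᵀ * G)) ^ 2 ≤ ξ →
        ∀ τ : ℝ, 0 < τ → τ ≤ τ₀ →
          -(w / τ) - ξ ≤ minner g G := by
  set K : ℝ := C₀ * CM * (1 + CM) with hK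
  have hKpos : 0 < K := by positivity
  refine ⟨4 * c₀ ^ 2 / K ^ 2, by positivity, ?_⟩
  intro F g G θ w ξ hFdet hF hFinv hθ hw hg hsym hξ τ hτ hττ₀
  set S : Matrix (Fin d) (Fin d) ℝ := (1 / 2 : ℝ) • (F⁻¹ * g) with hS
  set Cdot : Matrix (Fin d) (Fin d) ℝ := Gᵀ * F + Fᵀ * G with hC
  have hSt : Sᵀ = S := hsym
  -- g = F * (2 • S)
  have hgFS : g = F * ((2 : ℝ) • S) := by
    rw [hS, smul_smul]
    norm_num
    rw [Matrix.mul_nonsing_inv_cancel_left F g hFdet]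
  -- identity: minner g G = minner S Cdot
  have key : (S * (Gᵀ * F)).trace = (S * (Fᵀ * G)).trace := by
    have h1 : (S * (Gᵀ * F)).trace = ((S * (Gᵀ * F))ᵀ).trace := (Matrix.trace_transpose _).symm
    have h2 : (S * (Gᵀ * F))ᵀ = (Fᵀ * G) * S := by
      simp [Matrix.transpose_mul, hSt, Matrix.mul_assoc]
    rw [h1, h2, Matrix.trace_mul_comm]
  have hid : minner g G = minner S Cdot := by
    rw [minner_eq_trace, minner_eq_trace, hgFS]
    have hgt : (F * ((2 : ℝ) • S))ᵀ * G = (2 : ℝ) • (S * (Fᵀ * G)) := by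
      rw [Matrix.transpose_mul, Matrix.transpose_smul, hSt, Matrix.smul_mul,
        Matrix.smul_mul, Matrix.mul_assoc]
    rw [hgt, hSt, hC, Matrix.mul_add, Matrix.trace_add, Matrix.trace_smul, key]
    simp [smul_eq_mul]
    ring
  -- norm bound on S
  have hmin0 : 0 ≤ min θ 1 := le_min hθ zero_le_one
  have hminθ : min θ 1 ≤ θ := min_le_left _ _
  have hmin1 : min θ 1 ≤ 1 := min_le_right _ _
  have hbound : frobNorm S ≤ K * min θ 1 := by
    have h1 : frobNorm S = (1 / 2) * frobNorm (F⁻¹ * g) := by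
      rw [hS, frobNorm_smul]; norm_num
    have h2 : frobNorm (F⁻¹ * g) ≤ frobNorm F⁻¹ * frobNorm g := frobNorm_mul_le _ _
    have hgb : frobNorm g ≤ 2 * C₀ * min θ 1 * (1 + CM) := by
      refine hg.trans ?_
      have h3 : (1 : ℝ) + frobNorm F ≤ 1 + CM := by linarith
      exact mul_le_mul_of_nonneg_left h3 (mul_nonneg (by positivity) hmin0)
    have hFinv0 : 0 ≤ frobNorm F⁻¹ := frobNorm_nonneg _
    have hg0 : 0 ≤ frobNorm g := frobNorm_nonneg _
    rw [h1, hK]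
    nlinarith [mul_le_mul hFinv hgb hg0 hCM.le]
  have hCS : -(frobNorm S * frobNorm Cdot) ≤ minner S Cdot := neg_frob_le_minner _ _
  rw [hid]
  -- final arithmetic
  have hS0 : 0 ≤ frobNorm S := frobNorm_nonneg _
  have hC0 : 0 ≤ frobNorm Cdot := frobNorm_nonneg _
  set a := frobNorm S
  set b := frobNorm Cdot
  have hyoung : a * b ≤ a ^ 2 / (4 * c₀) + c₀ * b ^ 2 := by
    rw [div_add' _ _ _ (by positivity), le_div_iff₀ (by positivity)]
    nlinarith [sq_nonneg (a - 2 * c₀ * b)]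
  have ha2 : a ^ 2 ≤ K ^ 2 * θ := by
    have h1 : a ^ 2 ≤ (K * min θ 1) ^ 2 := by
      nlinarith [hbound, hS0, mul_nonneg hKpos.le hmin0]
    have h2 : (K * min θ 1) ^ 2 ≤ K ^ 2 * θ := by
      nlinarith [mul_nonneg (sq_nonneg K) (mul_nonneg hmin0 (by linarith : (0:ℝ) ≤ 1 - min θ 1)),
        mul_nonneg (sq_nonneg K) (by linarith : (0:ℝ) ≤ θ - min θ 1)]
    linarith
  have hτK : τ * K ^ 2 ≤ 4 * c₀ ^ 2 := (le_div_iff₀ (by positivity)).mp hττ₀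
  have h4 : a ^ 2 / (4 * c₀) ≤ w / τ := by
    rw [div_le_div_iff₀ (by positivity) hτ]
    nlinarith [mul_le_mul_of_nonneg_right ha2 hτ.le, mul_le_mul_of_nonneg_left hτK hθ]
  have h5 : c₀ * b ^ 2 ≤ ξ := hξ
  linarith
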